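/- arXiv:1808.09182 — 9 statements merged into one kernel-verified Lean document; each statement's English description precedes it below -/
import Mathlib

section
/- For real numbers α, β, γ with α > 0, β > 0, α + γ > 0 and β - γ > 0, one has Γ(α)Γ(β) / (Γ(α+γ)Γ(β-γ)) = ∏_{n=0}^∞ (1 + γ/(n+α)) (1 - γ/(n+β)), where the infinite product converges. -/
open Real

/-! When `a + b = a' + b'`, the powers `N ^ s` in Euler's approximants
`GammaSeq s N = N ^ s N! / ∏_{j ≤ N} (s + j)` cancel in
`GammaSeq a N GammaSeq b N / (GammaSeq a' N GammaSeq b' N)`, which is therefore the `N + 1`-st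
partial product of `∏ (a' + n) (b' + n) / ((a + n) (b + n))`. Euler's limit formula then
evaluates the product as `Γ(a) Γ(b) / (Γ(a') Γ(b'))`; take `a' = α + γ`, `b' = β - γ`. -/

open Filter Topology Finset

namespace Real

lemma summable_inv_add_nat_mul_add_nat {a b : ℝ} (ha : 0 < a) (hb : 0 < b) :
    Summable fun n : ℕ => ((a + n) * (b + n))⁻¹ := by
  have hm : 0 < min a b := lt_min ha hb
  refine Summable.of_nonneg_of_le (fun n => by positivity) (fun n => ?_)
    ((summable_one_div_nat_add_rpow (min a b) 2).mpr one_lt_two)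
  rw [rpow_two, sq_abs, one_div, sq]
  exact inv_anti₀ (by positivity) (mul_le_mul (by linarith [min_le_left a b])
    (by linarith [min_le_right a b]) (by positivity) (by positivity))

lemma multipliable_add_nat_mul_add_nat_div {a b a' b' : ℝ} (ha : 0 < a) (hb : 0 < b)
    (h : a + b = a' + b') :
    Multipliable fun n : ℕ => (a' + n) * (b' + n) / ((a + n) * (b + n)) := by
  -- since `a + b = a' + b'`, the factors are `1 + (a' b' - a b) / ((a + n) (b + n))`
  have hsum := (summable_inv_add_nat_mul_add_nat ha hb).mul_left (a' * b' - a * b)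
  refine (Real.multipliable_one_add_of_summable hsum).congr fun n => ?_
  have : (a + n) * (b + n) ≠ (0 : ℝ) := by positivity
  rw [eq_div_iff this, add_mul, mul_assoc, inv_mul_cancel₀ this]
  linear_combination (n : ℝ) * h

lemma GammaSeq_mul_div_GammaSeq_mul {a b a' b' : ℝ} (ha : 0 < a) (hb : 0 < b)
    (ha' : 0 < a') (hb' : 0 < b') (h : a + b = a' + b') {n : ℕ} (hn : n ≠ 0) :
    GammaSeq a n * GammaSeq b n / (GammaSeq a' n * GammaSeq b' n) =
      ∏ j ∈ range (n + 1), (a' + j) * (b' + j) / ((a + j) * (b + j)) := by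
  have hn : (0 : ℝ) < n := by positivity
  have hprod : ∀ s : ℝ, 0 < s → 0 < ∏ j ∈ range (n + 1), (s + j) :=
    fun s hs => prod_pos fun j _ => by positivity
  have hpow : (n : ℝ) ^ a' * (n : ℝ) ^ b' = (n : ℝ) ^ a * (n : ℝ) ^ b := by
    rw [← rpow_add hn, ← rpow_add hn, h]
  have := hprod a ha
  have := hprod b hb
  have := hprod a' ha'
  have := hprod b' hb'
  simp only [prod_div_distrib, prod_mul_distrib, GammaSeq]
  field_simp
  linear_combination -hpow

lemma hasProd_add_nat_mul_add_nat_div {a b a' b' : ℝ} (ha : 0 < a) (hb : 0 < b)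
    (ha' : 0 < a') (hb' : 0 < b') (h : a + b = a' + b') :
    HasProd (fun n : ℕ => (a' + n) * (b' + n) / ((a + n) * (b + n)))
      (Gamma a * Gamma b / (Gamma a' * Gamma b')) := by
  have hΓ : Gamma a' * Gamma b' ≠ 0 := (mul_pos (Gamma_pos_of_pos ha') (Gamma_pos_of_pos hb')).ne'
  have hGammaSeq := ((GammaSeq_tendsto_Gamma a).mul (GammaSeq_tendsto_Gamma b)).div
    ((GammaSeq_tendsto_Gamma a').mul (GammaSeq_tendsto_Gamma b')) hΓ
  rw [(multipliable_add_nat_mul_add_nat_div ha hb h).hasProd_iff_tendsto_nat,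
    ← tendsto_add_atTop_iff_nat 1]
  refine hGammaSeq.congr' ?_
  filter_upwards [eventually_ne_atTop 0] with n hn
  exact GammaSeq_mul_div_GammaSeq_mul ha hb ha' hb' h hn

end Real

theorem gamma_ratio_eq_tprod (α β γ : ℝ) (hα : 0 < α) (hβ : 0 < β)
    (hαγ : 0 < α + γ) (hβγ : 0 < β - γ) :
    Multipliable (fun n : ℕ => (1 + γ / (n + α)) * (1 - γ / (n + β))) ∧
    Real.Gamma α * Real.Gamma β / (Real.Gamma (α + γ) * Real.Gamma (β - γ)) =
      ∏' n : ℕ, (1 + γ / (n + α)) * (1 - γ / (n + β)) := by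
  have hfactor : (fun n : ℕ => (1 + γ / (n + α)) * (1 - γ / (n + β))) =
      fun n : ℕ => (α + γ + n) * (β - γ + n) / ((α + n) * (β + n)) := by
    ext n
    have : (n : ℝ) + α ≠ 0 := by positivity
    have : (n : ℝ) + β ≠ 0 := by positivity
    field_simp
    ring
  rw [hfactor]
  have h := hasProd_add_nat_mul_add_nat_div hα hβ hαγ hβγ (by ring)
  exact ⟨h.multipliable, h.tprod_eq.symm⟩
end

section
/- Let 0 < μ < 1 and τ ≥ 0 with μ + τ < 1. Then ∏_{n=0}^∞ [ (1 + τ/(n+μ)) (1 - τ/(n+1-μ)) ]^{-1} = sin(πμ) / sin(π(μ+τ)). -/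
open Real Filter Finset Topology
open scoped Nat

/-!
Since `(n + x) * (n + 1 - x) = n * (n + 1) + x * (1 - x)`, the factors are `1 + O(n⁻²)` and the
product converges. Its partial products are ratios of the products
`∏_{n ≤ N} (n + x) * (n + 1 - x)`, which appear in the denominator of Euler's sequence
`GammaSeq x N * GammaSeq (1 - x) N → Γ(x) Γ(1 - x) = π / sin (π x)`; the reflection formula
therefore evaluates the product.
-/

lemma GammaSeq_mul_GammaSeq_one_sub (x : ℝ) {N : ℕ} (hN : N ≠ 0) :
    GammaSeq x N * GammaSeq (1 - x) N =
      N * N ! ^ 2 / ∏ n ∈ range (N + 1), ((n + x) * (n + 1 - x)) := by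
  have hNx : (N : ℝ) ^ x * (N : ℝ) ^ (1 - x) = N := by
    rw [← rpow_add (by positivity), add_sub_cancel, rpow_one]
  simp only [GammaSeq, div_mul_div_comm, ← prod_mul_distrib]
  congr 1
  · linear_combination (N ! : ℝ) ^ 2 * hNx
  · refine prod_congr rfl fun n _ => ?_
    ring

lemma tendsto_prod_range_reflection (x : ℝ) :
    Tendsto (fun N : ℕ => N * N ! ^ 2 / ∏ n ∈ range (N + 1), ((n + x) * (n + 1 - x)))
      atTop (𝓝 (π / sin (π * x))) := by
  rw [← Gamma_mul_Gamma_one_sub]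
  refine ((GammaSeq_tendsto_Gamma x).mul (GammaSeq_tendsto_Gamma (1 - x))).congr' ?_
  filter_upwards [eventually_ne_atTop 0] with N hN using GammaSeq_mul_GammaSeq_one_sub x hN

lemma tendsto_prod_range_reflection_div {x : ℝ} (hx : sin (π * x) ≠ 0) (y : ℝ) :
    Tendsto (fun N : ℕ => ∏ n ∈ range N, ((n + x) * (n + 1 - x) / ((n + y) * (n + 1 - y))))
      atTop (𝓝 (sin (π * x) / sin (π * y))) := by
  rw [← tendsto_add_atTop_iff_nat 1]
  have hlim := (tendsto_prod_range_reflection y).div (tendsto_prod_range_reflection x)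
    (div_ne_zero pi_ne_zero hx)
  rw [div_div_div_cancel_left' _ _ pi_ne_zero] at hlim
  refine hlim.congr' ?_
  filter_upwards [eventually_ne_atTop 0] with N hN
  rw [Pi.div_apply, prod_div_distrib, div_div_div_cancel_left' _ _ (by positivity)]

lemma mul_one_sub_mul_sq_le {y : ℝ} (hy0 : 0 < y) (hy1 : y < 1) (n : ℕ) :
    y * (1 - y) * (n + 1) ^ 2 ≤ (n + y) * (n + 1 - y) := by
  have h1 : y * (n + 1) ≤ n + y := by nlinarith
  have h2 : (1 - y) * (n + 1) ≤ n + 1 - y := by nlinarith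
  nlinarith [mul_le_mul h1 h2 (by nlinarith) (by positivity)]

lemma summable_inv_mul_add_mul_add_one_sub {y : ℝ} (hy0 : 0 < y) (hy1 : y < 1) :
    Summable fun n : ℕ => ((n + y) * (n + 1 - y))⁻¹ := by
  have hsq : Summable fun n : ℕ => (y * (1 - y))⁻¹ * (((n : ℝ) + 1) ^ 2)⁻¹ := by
    refine .mul_left _ ?_
    simpa only [Nat.cast_add, Nat.cast_one] using
      (summable_nat_add_iff 1).mpr (summable_nat_pow_inv.mpr one_lt_two)
  refine .of_nonneg_of_le (fun n => ?_) (fun n => ?_) hsq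
  · have : 0 < (n + 1 - y) := by linarith
    positivity
  · rw [← mul_inv]
    exact inv_anti₀ (by have := sub_pos.mpr hy1; positivity)
      (mul_one_sub_mul_sq_le hy0 hy1 n)

lemma multipliable_reflection_div (x : ℝ) {y : ℝ} (hy0 : 0 < y) (hy1 : y < 1) :
    Multipliable fun n : ℕ => (n + x) * (n + 1 - x) / ((n + y) * (n + 1 - y)) := by
  have hterm : ∀ n : ℕ, (n + x) * (n + 1 - x) / ((n + y) * (n + 1 - y)) =
      1 + (x * (1 - x) - y * (1 - y)) * ((n + y) * (n + 1 - y))⁻¹ := by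
    intro n
    have : (n : ℝ) + y ≠ 0 := by positivity
    have : (n : ℝ) + 1 - y ≠ 0 := by linarith [(n.cast_nonneg : (0 : ℝ) ≤ n)]
    field_simp
    ring
  simp only [hterm]
  exact multipliable_one_add_of_summable
    ((summable_inv_mul_add_mul_add_one_sub hy0 hy1).mul_left _).norm

theorem hasProd_reflection_div {x y : ℝ} (hx0 : 0 < x) (hx1 : x < 1)
    (hy0 : 0 < y) (hy1 : y < 1) :
    HasProd (fun n : ℕ => (n + x) * (n + 1 - x) / ((n + y) * (n + 1 - y)))
      (sin (π * x) / sin (π * y)) := by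
  have hsin : sin (π * x) ≠ 0 :=
    (sin_pos_of_pos_of_lt_pi (by positivity) (by nlinarith [pi_pos])).ne'
  exact (multipliable_reflection_div x hy0 hy1).hasProd_iff_tendsto_nat.mpr
    (tendsto_prod_range_reflection_div hsin y)

theorem tprod_inv_eq_sin_ratio (μ τ : ℝ) (hμ0 : 0 < μ) (hμ1 : μ < 1)
    (hτ : 0 ≤ τ) (hμτ : μ + τ < 1) :
    ∏' n : ℕ, ((1 + τ / (n + μ)) * (1 - τ / (n + 1 - μ)))⁻¹ =
      Real.sin (π * μ) / Real.sin (π * (μ + τ)) := by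
  have hterm : ∀ n : ℕ, ((1 + τ / (n + μ)) * (1 - τ / (n + 1 - μ)))⁻¹ =
      (n + μ) * (n + 1 - μ) / ((n + (μ + τ)) * (n + 1 - (μ + τ))) := by
    intro n
    have : (n : ℝ) + 1 - μ ≠ 0 := by linarith [(n.cast_nonneg : (0 : ℝ) ≤ n)]
    field_simp
    ring
  simp only [hterm]
  exact (hasProd_reflection_div hμ0 hμ1 (by linarith) hμτ).tprod_eq
end

section
/- For τ > 0, ∏_{n=1}^∞ (1 + 2τ/(n(n+1)))^{-1} = 2πτ / cosh(π √(2τ - 1/4)), where for 2τ < 1/4 the right-hand side is interpreted via cosh(π√(2τ-1/4)) = cos(π√(1/4-2τ)). -/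
/-!
Write `2τ = a (1 - a)` with `a = 1/2 + i √(2τ - 1/4)`. Then
`1 + a (1 - a) / ((n+1)(n+2)) = (n+1+a)(n+2-a) / ((n+1)(n+2))`, so the partial products are,
up to a factor `(N+1)/N`, the product of Euler's sequences `GammaSeq a N * GammaSeq (1-a) N`.
They therefore converge to `a (1 - a) Γ(a) Γ(1-a) = 2τπ / sin(πa)` by the reflection formula,
and `sin(πa) = cosh(π √(2τ - 1/4))`.
-/

open Real Filter Topology Finset
open scoped Nat

namespace Complex

lemma prod_range_add_one_mul_add_two (N : ℕ) :
    ∏ n ∈ range N, (((n : ℂ) + 1) * ((n : ℂ) + 2)) = N ! * (N + 1)! := by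
  rw [prod_mul_distrib, ← prod_range_add_one_eq_factorial, ← prod_range_add_one_eq_factorial,
    prod_range_succ']
  push_cast
  ring_nf

lemma GammaSeq_mul_GammaSeq_one_sub (a : ℂ) {N : ℕ} (hN : N ≠ 0) :
    GammaSeq a N * GammaSeq (1 - a) N =
      N * (N ! : ℂ) ^ 2 / (a * (1 - a) *
        ∏ n ∈ range N, (((n : ℂ) + 1) * ((n : ℂ) + 2) + a * (1 - a))) := by
  have hpow : (N : ℂ) ^ a * (N : ℂ) ^ (1 - a) = N := by
    rw [← cpow_add _ _ (Nat.cast_ne_zero.mpr hN), add_sub_cancel, cpow_one]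
  have hprod : ∏ j ∈ range (N + 1), ((a + j) * (1 - a + j)) =
      a * (1 - a) * ∏ n ∈ range N, (((n : ℂ) + 1) * ((n : ℂ) + 2) + a * (1 - a)) := by
    rw [prod_range_succ', mul_comm]
    push_cast
    congr 1
    · ring
    · exact prod_congr rfl fun n _ => by ring
  rw [GammaSeq, GammaSeq, div_mul_div_comm, ← prod_mul_distrib, hprod]
  congr 1
  linear_combination (N ! : ℂ) ^ 2 * hpow

lemma prod_range_inv_one_add_div_eq_GammaSeq_mul {a : ℂ} (ha : a * (1 - a) ≠ 0) {N : ℕ}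
    (hN : N ≠ 0) :
    ∏ n ∈ range N, (1 + a * (1 - a) / (((n : ℂ) + 1) * ((n : ℂ) + 2)))⁻¹ =
      (N + 1) / N * (a * (1 - a) * (GammaSeq a N * GammaSeq (1 - a) N)) := by
  have hterm : ∀ n : ℕ, (1 + a * (1 - a) / (((n : ℂ) + 1) * ((n : ℂ) + 2)))⁻¹ =
      ((n : ℂ) + 1) * ((n : ℂ) + 2) / (((n : ℂ) + 1) * ((n : ℂ) + 2) + a * (1 - a)) := by
    intro n
    have : ((n : ℂ) + 1) * ((n : ℂ) + 2) ≠ 0 := by norm_cast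
    rw [one_add_div this, inv_div]
  rw [prod_congr rfl fun n _ => hterm n, prod_div_distrib, prod_range_add_one_mul_add_two,
    GammaSeq_mul_GammaSeq_one_sub a hN, Nat.factorial_succ]
  push_cast
  field_simp
  conv_lhs => rw [← mul_div_mul_left _ _ ha]
  ring

theorem tendsto_prod_range_inv_one_add_div {a : ℂ} (ha : a * (1 - a) ≠ 0) :
    Tendsto (fun N : ℕ => ∏ n ∈ range N, (1 + a * (1 - a) / (((n : ℂ) + 1) * ((n : ℂ) + 2)))⁻¹)
      atTop (𝓝 (a * (1 - a) * π / sin (π * a))) := by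
  have hratio : Tendsto (fun N : ℕ => ((N : ℂ) + 1) / N) atTop (𝓝 1) := by
    simpa [inv_div] using (tendsto_natCast_div_add_atTop (1 : ℂ)).inv₀ one_ne_zero
  have hlim := hratio.mul <| (tendsto_const_nhds (x := a * (1 - a))).mul
      ((GammaSeq_tendsto_Gamma a).mul (GammaSeq_tendsto_Gamma (1 - a)))
  rw [Gamma_mul_Gamma_one_sub, one_mul, ← mul_div_assoc] at hlim
  refine hlim.congr' ?_
  filter_upwards [eventually_ne_atTop 0] with N hN
  exact (prod_range_inv_one_add_div_eq_GammaSeq_mul ha hN).symm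

end Complex

lemma Real.multipliable_inv_one_add_of_summable {ι : Type*} {f : ι → ℝ} (hf₀ : ∀ i, 0 ≤ f i)
    (hf : Summable f) : Multipliable fun i => (1 + f i)⁻¹ := by
  have hbound : ∀ i, ‖(1 + f i)⁻¹ - 1‖ ≤ f i := by
    intro i
    have hpos : 0 < 1 + f i := by linarith [hf₀ i]
    have hinv : (1 + f i) * (1 + f i)⁻¹ = 1 := mul_inv_cancel₀ hpos.ne'
    rw [Real.norm_eq_abs, abs_le]
    constructor <;> nlinarith [hf₀ i, inv_pos.2 hpos]
  simpa using Real.multipliable_one_add_of_summable (hf.of_norm_bounded hbound)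

lemma summable_div_add_one_mul_add_two (c : ℝ) :
    Summable fun n : ℕ => c / (((n : ℝ) + 1) * ((n : ℝ) + 2)) := by
  have hsq : Summable fun n : ℕ => 1 / ((n : ℝ) + 1) ^ 2 := by
    simpa using (summable_nat_add_iff 1).mpr (Real.summable_one_div_nat_pow.mpr one_lt_two)
  refine (hsq.mul_left |c|).of_norm_bounded fun n => ?_
  have hden : 0 < ((n : ℝ) + 1) * ((n : ℝ) + 2) := by positivity
  rw [norm_div, Real.norm_eq_abs, Real.norm_eq_abs, abs_of_pos hden, mul_one_div]
  gcongr
  nlinarith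

theorem tprod_inv_eq_cosh_formula (τ : ℝ) (hτ : 0 < τ) :
    ((∏' n : ℕ, (1 + 2 * τ / ((n + 1) * (n + 2)))⁻¹ : ℝ) : ℂ) =
      (2 * Real.pi * τ : ℂ) /
        Complex.cosh ((Real.pi : ℂ) * ((2 * τ - 1 / 4 : ℂ) ^ ((1 : ℂ) / 2))) := by
  set w : ℂ := (2 * τ - 1 / 4 : ℂ) ^ ((1 : ℂ) / 2)
  set a : ℂ := 1 / 2 + Complex.I * w
  have hw : w ^ 2 = 2 * τ - 1 / 4 := by simp [w, one_div]
  have ha : a * (1 - a) = 2 * τ := by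
    linear_combination hw - w ^ 2 * Complex.I_sq
  have hsin : Complex.sin (π * a) = Complex.cosh (π * w) := by
    rw [show (π : ℂ) * a = π / 2 + π * w * Complex.I by ring, Complex.sin_add_mul_I,
      Complex.sin_pi_div_two, Complex.cos_pi_div_two]
    ring
  have hmult : Multipliable fun n : ℕ => (1 + 2 * τ / (((n : ℝ) + 1) * ((n : ℝ) + 2)))⁻¹ :=
    Real.multipliable_inv_one_add_of_summable (fun n => by positivity)
      (summable_div_add_one_mul_add_two _)
  have hreal := (hmult.hasProd.map Complex.ofRealHom Complex.continuous_ofReal).tendsto_prod_nat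
  have hcomplex := Complex.tendsto_prod_range_inv_one_add_div (a := a)
    (by rw [ha]; exact mul_ne_zero two_ne_zero (Complex.ofReal_ne_zero.2 hτ.ne'))
  simp only [Function.comp_def, Complex.ofRealHom_eq_coe] at hreal
  push_cast [ha] at hreal hcomplex
  rw [tendsto_nhds_unique hreal hcomplex, hsin]
  ring
end

section
/- For all z ∈ ℂ, cosh(πz) = (1 + 4z²) ∏_{n=1}^∞ (1 + z²/(n + 1/2)²), and the infinite product converges. -/
/-!
Put `x = w + 1/2` in Euler's product `sin (π x) = π x ∏ (1 - x²/n²)`. Since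
`n² - x² = (n - 1/2 - w) (n + 1/2 + w)`, the factors of the `N`-th partial product are those of
`∏_{j<N} ((j + 1/2)² - w²)` shifted by one in the second linear factor, so the two partial
products agree up to the ratio `(N + 1/2 + w) / (w + 1/2)` and the constant normalisations
`∏ n²`, `∏ (j + 1/2)²`. Dividing by the case `w = 0` (Wallis' product) removes the constants, and
`sin (π (w + 1/2)) = cos (π w)` gives the cosine product; `w = z i` turns it into the product
for `cosh`.
-/

open Filter Finset Complex Topology
open scoped Real

lemma prod_one_sub_sq_div_sq_mul_prod_sq {ι K : Type*} [Field K] (s : Finset ι) (a : ι → K)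
    (ha : ∀ i ∈ s, a i ≠ 0) (x : K) :
    (∏ i ∈ s, (1 - x ^ 2 / a i ^ 2)) * ∏ i ∈ s, a i ^ 2 = ∏ i ∈ s, (a i ^ 2 - x ^ 2) := by
  rw [← prod_mul_distrib]
  refine prod_congr rfl fun i hi => ?_
  field_simp [ha i hi]

lemma natCast_add_half_ne_zero (n : ℕ) : (n : ℂ) + 1 / 2 ≠ 0 := by
  have h : ((n + 1 / 2 : ℝ) : ℂ) ≠ 0 := Complex.ofReal_ne_zero.mpr (by positivity)
  simpa using h

lemma prod_sq_sub_sq_half_telescope (w : ℂ) (N : ℕ) :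
    (∏ j ∈ range N, (((j : ℂ) + 1) ^ 2 - (w + 1 / 2) ^ 2)) * (w + 1 / 2) =
      (∏ j ∈ range N, (((j : ℂ) + 1 / 2) ^ 2 - w ^ 2)) * (N + 1 / 2 + w) := by
  induction N with
  | zero => simp only [range_zero, prod_empty, one_mul, Nat.cast_zero, zero_add]; ring
  | succ N ih =>
    simp only [prod_range_succ, Nat.cast_succ]
    linear_combination (((N : ℂ) + 1) ^ 2 - (w + 1 / 2) ^ 2) * ih

lemma summable_norm_div_natCast_add_sq (x : ℂ) (a : ℝ) :
    Summable fun n : ℕ => ‖x / ((n : ℂ) + a) ^ 2‖ := by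
  refine (((Real.summable_one_div_nat_add_rpow a 2).mpr one_lt_two).mul_left ‖x‖).congr
    fun n => ?_
  rw [← Complex.ofReal_natCast, ← Complex.ofReal_add, norm_div, norm_pow, Complex.norm_real,
    Real.norm_eq_abs, Real.rpow_two, mul_one_div]

lemma euler_sin_partial_prod_half_add_mul (w : ℂ) (N : ℕ) :
    (π * (w + 1 / 2) * ∏ j ∈ range N, (1 - (w + 1 / 2) ^ 2 / ((j : ℂ) + 1) ^ 2)) *
        ∏ j ∈ range N, ((j : ℂ) + 1) ^ 2 =
      π * (∏ j ∈ range N, (1 - w ^ 2 / ((j : ℂ) + 1 / 2) ^ 2)) *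
        (∏ j ∈ range N, ((j : ℂ) + 1 / 2) ^ 2) * (N + 1 / 2 + w) := by
  have h1 := prod_one_sub_sq_div_sq_mul_prod_sq (range N) (fun j : ℕ => (j : ℂ) + 1)
    (fun j _ => Nat.cast_add_one_ne_zero j) (w + 1 / 2)
  have h2 := prod_one_sub_sq_div_sq_mul_prod_sq (range N) (fun j : ℕ => (j : ℂ) + 1 / 2)
    (fun j _ => natCast_add_half_ne_zero j) w
  linear_combination π * (w + 1 / 2) * h1 - π * (N + 1 / 2 + w) * h2 +
    π * prod_sq_sub_sq_half_telescope w N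

lemma cos_partial_prod_eq_euler_sin_partial_prod_div (w : ℂ) {N : ℕ} (hN : N ≠ 0)
    (hw : (N : ℂ) + (1 / 2 + w) ≠ 0) :
    ∏ j ∈ range N, (1 - w ^ 2 / ((j : ℂ) + 1 / 2) ^ 2) =
      (π * (w + 1 / 2) * ∏ j ∈ range N, (1 - (w + 1 / 2) ^ 2 / ((j : ℂ) + 1) ^ 2)) /
          (π * (1 / 2) * ∏ j ∈ range N, (1 - (1 / 2 : ℂ) ^ 2 / ((j : ℂ) + 1) ^ 2)) *
        (N / (N + (1 / 2 + w)) / (N / (N + 1 / 2))) := by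
  have hw' := euler_sin_partial_prod_half_add_mul w N
  have h0 := euler_sin_partial_prod_half_add_mul 0 N
  simp only [zero_add, add_zero, ne_eq, OfNat.ofNat_ne_zero, not_false_eq_true, zero_pow,
    zero_div, sub_zero, prod_const_one, mul_one] at h0
  have hpi : (π : ℂ) ≠ 0 := ofReal_ne_zero.mpr Real.pi_ne_zero
  have hhalf := natCast_add_half_ne_zero N
  have hA : ∏ j ∈ range N, ((j : ℂ) + 1) ^ 2 ≠ 0 :=
    prod_ne_zero_iff.mpr fun j _ => pow_ne_zero 2 (Nat.cast_add_one_ne_zero j)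
  have hB : ∏ j ∈ range N, ((j : ℂ) + 1 / 2) ^ 2 ≠ 0 :=
    prod_ne_zero_iff.mpr fun j _ => pow_ne_zero 2 (natCast_add_half_ne_zero j)
  generalize ∏ j ∈ range N, ((j : ℂ) + 1) ^ 2 = A at *
  generalize ∏ j ∈ range N, ((j : ℂ) + 1 / 2) ^ 2 = B at *
  generalize ∏ j ∈ range N, (1 - w ^ 2 / ((j : ℂ) + 1 / 2) ^ 2) = C at *
  generalize (π : ℂ) * (w + 1 / 2) * ∏ j ∈ range N, (1 - (w + 1 / 2) ^ 2 / ((j : ℂ) + 1) ^ 2)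
    = Sw at *
  generalize (π : ℂ) * (1 / 2) * ∏ j ∈ range N, (1 - (1 / 2 : ℂ) ^ 2 / ((j : ℂ) + 1) ^ 2)
    = S0 at *
  have hS0 : S0 ≠ 0 := by
    rintro rfl
    exact mul_ne_zero (mul_ne_zero hpi hB) hhalf (by rw [← h0, zero_mul])
  calc C = Sw * A * (N + 1 / 2) / (S0 * A * (N + 1 / 2 + w)) := by
        rw [hw', h0, eq_div_iff (mul_ne_zero (mul_ne_zero (mul_ne_zero hpi hB) hhalf)
          (by rw [add_assoc]; exact hw))]
        ring
    _ = Sw / S0 * (N / (N + (1 / 2 + w)) / (N / (N + 1 / 2))) := by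
        field_simp
        ring

theorem Complex.tendsto_euler_cos_prod (w : ℂ) :
    Tendsto (fun N : ℕ => ∏ j ∈ range N, (1 - w ^ 2 / ((j : ℂ) + 1 / 2) ^ 2)) atTop
      (𝓝 (cos (π * w))) := by
  have hsin_half : sin (π * (1 / 2)) = 1 := by rw [mul_one_div, sin_pi_div_two]
  have hsin := (tendsto_euler_sin_prod (w + 1 / 2)).div (tendsto_euler_sin_prod (1 / 2))
    (by rw [hsin_half]; exact one_ne_zero)
  have hratio := (tendsto_natCast_div_add_atTop (1 / 2 + w)).div
    (tendsto_natCast_div_add_atTop (1 / 2 : ℂ)) one_ne_zero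
  have hval : sin (π * (w + 1 / 2)) / sin (π * (1 / 2)) * (1 / 1) = cos (π * w) := by
    rw [hsin_half, mul_add, mul_one_div _ (2 : ℂ), sin_add_pi_div_two]; simp
  rw [← hval]
  refine (hsin.mul hratio).congr' ?_
  filter_upwards [eventually_ne_atTop 0,
    (tendsto_natCast_div_add_atTop (1 / 2 + w)).eventually_ne one_ne_zero] with N hN hw
  exact (cos_partial_prod_eq_euler_sin_partial_prod_div w hN (div_ne_zero_iff.mp hw).2).symm

lemma multipliable_one_sub_sq_div_natCast_add_sq (w : ℂ) (a : ℝ) :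
    Multipliable fun n : ℕ => 1 - w ^ 2 / ((n : ℂ) + a) ^ 2 := by
  have hs : Summable fun n : ℕ => ‖-(w ^ 2 / ((n : ℂ) + a) ^ 2)‖ := by
    simpa only [norm_neg] using summable_norm_div_natCast_add_sq (w ^ 2) a
  exact (multipliable_one_add_of_summable hs).congr fun n => (sub_eq_add_neg _ _).symm

theorem Complex.hasProd_cos_pi_mul (w : ℂ) :
    HasProd (fun n : ℕ => 1 - w ^ 2 / ((n : ℂ) + 1 / 2) ^ 2) (cos (π * w)) := by
  have hm := multipliable_one_sub_sq_div_natCast_add_sq w (1 / 2)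
  push_cast at hm
  exact (hm.hasProd_iff_tendsto_nat).mpr (tendsto_euler_cos_prod w)

theorem cosh_eq_tprod (z : ℂ) :
    Multipliable (fun n : ℕ => 1 + z ^ 2 / (((n : ℂ) + 1) + 1 / 2) ^ 2) ∧
    Complex.cosh ((Real.pi : ℂ) * z) =
      (1 + 4 * z ^ 2) * ∏' n : ℕ, (1 + z ^ 2 / (((n : ℂ) + 1) + 1 / 2) ^ 2) := by
  set f : ℕ → ℂ := fun n => 1 - (z * I) ^ 2 / ((n : ℂ) + 1 / 2) ^ 2 with hf
  have hf_succ :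
      (fun n : ℕ => f (n + 1)) = fun n : ℕ => 1 + z ^ 2 / (((n : ℂ) + 1) + 1 / 2) ^ 2 := by
    ext n
    simp only [hf, mul_pow, I_sq, Nat.cast_succ]
    ring
  have hm : Multipliable fun n : ℕ => f (n + 1) := by
    have := multipliable_one_sub_sq_div_natCast_add_sq (z * I) (3 / 2)
    refine this.congr fun n => ?_
    simp only [hf]; push_cast; ring
  refine ⟨hf_succ ▸ hm, ?_⟩
  rw [← hf_succ, ← cos_mul_I, mul_assoc, ← (hasProd_cos_pi_mul (z * I)).tprod_eq,
    tprod_eq_zero_mul' hm]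
  simp only [hf, mul_pow, I_sq]
  ring
end

section
/- The Fourier transform of the function x ↦ 1/(π cosh x) on ℝ is λ ↦ 1/cosh(λπ/2); that is, for all real λ, ∫_ℝ e^{iλx}/(π cosh x) dx = 1/cosh(λπ/2). In particular, x ↦ 1/(π cosh x) is a probability density on ℝ. -/
/-!
The substitution `y = sigmoid t` turns `∫ e^{ut} / (1 + e^t) dt` into the Beta integral
`B(u, 1 - u) = Γ(u) Γ(1 - u) = π / sin (π u)`, valid for `0 < re u < 1`. Rescaling `t = 2x`
gives `∫ e^{sx} / cosh x dx = π / cos (π s / 2)` for `|re s| < 1`, and `s = iλ` is the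
Fourier transform. At `λ = 0` it says that `1 / (π cosh x)` has total mass one.
-/

open Real MeasureTheory Set

theorem Complex.betaIntegral_one_sub {u : ℂ} (hu : 0 < u.re) (hu' : u.re < 1) :
    betaIntegral u (1 - u) = π / sin (π * u) := by
  rw [← Gamma_mul_Gamma_one_sub, Gamma_mul_Gamma_eq_betaIntegral hu (by simpa using hu'),
    add_sub_cancel, Gamma_one, one_mul]

namespace Real

lemma log_one_sub_sigmoid (t : ℝ) : log (1 - sigmoid t) = log (sigmoid t) - t := by
  rw [← sigmoid_neg, ← sigmoid_mul_rexp_neg, log_mul (sigmoid_pos t).ne' (exp_pos _).ne',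
    log_exp, sub_eq_add_neg]

lemma sigmoid_mul_one_sub_sigmoid_smul_cpow_mul_cpow (u : ℂ) (t : ℝ) :
    (sigmoid t * (1 - sigmoid t)) •
        ((sigmoid t : ℂ) ^ (u - 1) * (1 - (sigmoid t : ℂ)) ^ (1 - u - 1)) =
      Complex.exp (u * t) / (1 + exp t) := by
  have ha := sigmoid_pos t
  have hb : 0 < 1 - sigmoid t := sub_pos.2 (sigmoid_lt_one t)
  rw [show 1 - (sigmoid t : ℂ) = ((1 - sigmoid t : ℝ) : ℂ) by push_cast; rfl,
    Complex.cpow_def_of_ne_zero (by exact_mod_cast ha.ne'),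
    Complex.cpow_def_of_ne_zero (by exact_mod_cast hb.ne'), ← Complex.ofReal_log ha.le,
    ← Complex.ofReal_log hb.le, log_one_sub_sigmoid, ← Complex.exp_add, Complex.real_smul]
  have h_one_sub : 1 - sigmoid t = (1 + exp t)⁻¹ := by rw [← sigmoid_neg, sigmoid_def, neg_neg]
  have h_exponent :
      (log (sigmoid t) : ℂ) * (u - 1) + ((log (sigmoid t) - t : ℝ) : ℂ) * (1 - u - 1) =
        u * t - log (sigmoid t) := by
    push_cast; ring
  rw [h_exponent, Complex.exp_sub, ← Complex.ofReal_exp, exp_log ha, h_one_sub]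
  have ha' : (sigmoid t : ℂ) ≠ 0 := by exact_mod_cast ha.ne'
  push_cast
  field_simp

end Real

theorem integral_cexp_mul_div_one_add_exp {u : ℂ} (hu : 0 < u.re) (hu' : u.re < 1) :
    ∫ t : ℝ, Complex.exp (u * t) / (1 + exp t) = π / Complex.sin (π * u) := by
  have h_subst := integral_image_eq_integral_abs_deriv_smul MeasurableSet.univ
    (fun t _ => (hasDerivAt_sigmoid t).hasDerivWithinAt) sigmoid_injective.injOn
    (fun y : ℝ => (y : ℂ) ^ (u - 1) * (1 - (y : ℂ)) ^ (1 - u - 1))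
  rw [image_univ, range_sigmoid, setIntegral_univ] at h_subst
  rw [← Complex.betaIntegral_one_sub hu hu', Complex.betaIntegral,
    intervalIntegral.integral_of_le zero_le_one, integral_Ioc_eq_integral_Ioo, h_subst]
  congr 1 with t
  rw [abs_of_pos (mul_pos (sigmoid_pos t) (sub_pos.2 (sigmoid_lt_one t))),
    sigmoid_mul_one_sub_sigmoid_smul_cpow_mul_cpow]

theorem integral_cexp_mul_div_cosh {s : ℂ} (hs : |s.re| < 1) :
    ∫ x : ℝ, Complex.exp (s * x) / cosh x = π / Complex.cos (π * s / 2) := by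
  obtain ⟨hs₁, hs₂⟩ := abs_lt.1 hs
  set u := (1 + s) / 2
  have hu : 0 < u.re := by
    simp only [u, Complex.div_ofNat_re, Complex.add_re, Complex.one_re]; linarith
  have hu' : u.re < 1 := by
    simp only [u, Complex.div_ofNat_re, Complex.add_re, Complex.one_re]; linarith
  have h_rescale (x : ℝ) : Complex.exp (s * x) / cosh x =
      2 * (Complex.exp (u * ↑(2 * x)) / (1 + exp (2 * x))) := by
    have : (cosh x : ℂ) ≠ 0 := by exact_mod_cast (cosh_pos x).ne'
    have : (1 + exp (2 * x) : ℂ) ≠ 0 := by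
      exact_mod_cast (by positivity : 0 < 1 + exp (2 * x)).ne'
    rw [Complex.ofReal_cosh, Complex.cosh, show u * ↑(2 * x) = s * x + x by push_cast; ring]
    push_cast
    rw [Complex.exp_add, show (2 * x : ℂ) = x + x by ring, Complex.exp_add, Complex.exp_neg]
    field_simp
    ring
  simp_rw [h_rescale]
  rw [integral_const_mul,
    Measure.integral_comp_mul_left (fun t : ℝ => Complex.exp (u * t) / (1 + exp t)),
    integral_cexp_mul_div_one_add_exp hu hu', show (π : ℂ) * u = π * s / 2 + π / 2 by ring,
    Complex.sin_add_pi_div_two, abs_inv, abs_two, Complex.real_smul]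
  push_cast
  ring

theorem fourier_sech (lam : ℝ) :
    (∫ x : ℝ, Complex.exp (Complex.I * lam * x) / (Real.pi * Real.cosh x)) =
      1 / (Real.cosh (lam * Real.pi / 2) : ℂ) ∧
    (∫ x : ℝ, 1 / (Real.pi * Real.cosh x)) = 1 ∧
    (∀ x : ℝ, 0 ≤ 1 / (Real.pi * Real.cosh x)) := by
  have fourier (μ : ℝ) : (∫ x : ℝ, Complex.exp (Complex.I * μ * x) / (π * cosh x)) =
      1 / (cosh (μ * π / 2) : ℂ) := by
    have hπ : (π : ℂ) ≠ 0 := by exact_mod_cast pi_ne_zero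
    simp_rw [mul_comm (π : ℂ), ← div_div, integral_div]
    rw [integral_cexp_mul_div_cosh (by simp), Complex.ofReal_cosh, ← Complex.cos_mul_I,
      div_right_comm, div_self hπ]
    congr 2
    push_cast
    ring
  refine ⟨fourier lam, ?_, fun x => by have := cosh_pos x; positivity⟩
  have mass := fourier 0
  simp only [Complex.ofReal_zero, mul_zero, zero_mul, Complex.exp_zero, zero_div, cosh_zero,
    Complex.ofReal_one, div_one] at mass
  exact_mod_cast mass
end

section
/- For α ∈ (0,1), t > 0 and x ∈ ℝ, define φ_α(t,x) = (e^{-αx}/sin(απ)) ∑_{k∈ℤ} sinh(α(2kt+x)) e^{-2(kx+k²t)}. Then the series converges absolutely and φ_α(t,x) = φ_{1-α}(t, t-x). -/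
open Real

/-- The theta-type function `φ_α(t,x)`. -/
noncomputable def phi (α t x : ℝ) : ℝ :=
  Real.exp (-(α * x)) / Real.sin (α * π) *
    ∑' k : ℤ, Real.sinh (α * (2 * k * t + x)) * Real.exp (-(2 * (k * x + k ^ 2 * t)))

private lemma summable_quad_nat (t c d : ℝ) (ht : 0 < t) :
    Summable fun n : ℕ => Real.exp (-t * n ^ 2 + c * n + d) := by
  apply summable_of_ratio_norm_eventually_le (r := 1 / 2) (by norm_num)
  rw [Filter.eventually_atTop]
  refine ⟨⌈(c - Real.log (1 / 2)) / (2 * t)⌉₊, fun n hn => ?_⟩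
  have h1 : (c - Real.log (1 / 2)) / (2 * t) ≤ (n : ℝ) :=
    (Nat.le_ceil _).trans (by exact_mod_cast hn)
  have h2 : c - Real.log (1 / 2) ≤ 2 * t * n := by
    rwa [div_le_iff₀ (by positivity), mul_comm] at h1
  have key : -t * ((n : ℝ) + 1) ^ 2 + c * ((n : ℝ) + 1) + d =
      (-t * (n : ℝ) ^ 2 + c * (n : ℝ) + d) + (-t * (2 * (n : ℝ) + 1) + c) := by ring
  rw [Real.norm_eq_abs, Real.norm_eq_abs, Real.abs_exp, Real.abs_exp]
  push_cast
  rw [key, Real.exp_add, mul_comm ((1:ℝ)/2)]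
  refine mul_le_mul_of_nonneg_left ?_ (Real.exp_pos _).le
  have h3 : -t * (2 * (n : ℝ) + 1) + c ≤ Real.log (1 / 2) := by nlinarith
  calc Real.exp (-t * (2 * (n : ℝ) + 1) + c) ≤ Real.exp (Real.log (1 / 2)) :=
        Real.exp_le_exp.2 h3
    _ = 1 / 2 := Real.exp_log (by norm_num)

private lemma summable_quad (t c d : ℝ) (ht : 0 < t) :
    Summable fun k : ℤ => Real.exp (-t * (k : ℝ) ^ 2 + c * k + d) := by
  apply Summable.of_nat_of_neg
  · exact (summable_quad_nat t c d ht).congr fun n => by push_cast; ring_nf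
  · exact (summable_quad_nat t (-c) d ht).congr fun n => by push_cast; ring_nf

private lemma exp_mul_sinh_mul_exp (a u v : ℝ) :
    Real.exp a * (Real.sinh u * Real.exp v) =
      (Real.exp (a + u + v) - Real.exp (a - u + v)) / 2 := by
  simp only [Real.sinh_eq, Real.exp_add, Real.exp_sub, Real.exp_neg]
  have := (Real.exp_pos u).ne'
  field_simp

private lemma abs_sinh_mul_exp_le (u v : ℝ) :
    |Real.sinh u * Real.exp v| ≤
      (Real.exp (u + v) + Real.exp (-u + v)) / 2 := by
  rw [abs_mul, Real.abs_exp]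
  have h : |Real.sinh u| ≤ (Real.exp u + Real.exp (-u)) / 2 := by
    rw [Real.sinh_eq, abs_div, abs_two, div_le_div_iff₀ (by norm_num) (by norm_num)]
    calc |Real.exp u - Real.exp (-u)| * 2 ≤ (|Real.exp u| + |Real.exp (-u)|) * 2 := by
          gcongr; exact abs_sub _ _
      _ = (Real.exp u + Real.exp (-u)) * 2 := by rw [Real.abs_exp, Real.abs_exp]
  calc |Real.sinh u| * Real.exp v ≤ (Real.exp u + Real.exp (-u)) / 2 * Real.exp v := by
        gcongr
    _ = (Real.exp (u + v) + Real.exp (-u + v)) / 2 := by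
        rw [Real.exp_add, Real.exp_add]; ring

theorem phi_symmetry (α t x : ℝ) (hα0 : 0 < α) (hα1 : α < 1) (ht : 0 < t) :
    Summable (fun k : ℤ =>
      |Real.sinh (α * (2 * k * t + x)) * Real.exp (-(2 * (k * x + k ^ 2 * t)))|) ∧
    phi α t x = phi (1 - α) t (t - x) := by
  have h2t : (0:ℝ) < 2 * t := by linarith
  -- Summability part
  have hsum : Summable (fun k : ℤ =>
      |Real.sinh (α * (2 * k * t + x)) * Real.exp (-(2 * (k * x + k ^ 2 * t)))|) := by
    have hP : Summable fun k : ℤ =>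
        Real.exp (-(2*t) * (k:ℝ)^2 + (2*α*t - 2*x) * k + α*x) :=
      summable_quad (2*t) _ _ h2t
    have hQ : Summable fun k : ℤ =>
        Real.exp (-(2*t) * (k:ℝ)^2 + (-(2*α*t) - 2*x) * k + (-(α*x))) :=
      summable_quad (2*t) _ _ h2t
    refine Summable.of_nonneg_of_le (fun k => abs_nonneg _) (fun k => ?_)
      ((hP.add hQ).div_const 2)
    refine (abs_sinh_mul_exp_le _ _).trans_eq ?_
    congr 2
    · congr 1; push_cast; ring
    · congr 1; push_cast; ring
  refine ⟨hsum, ?_⟩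
  -- The identity
  set β := 1 - α with hβ
  set y := t - x with hy
  -- key computation
  have key : ∀ (γ z : ℝ),
      Real.exp (-(γ * z)) * ∑' k : ℤ,
        Real.sinh (γ * (2 * k * t + z)) * Real.exp (-(2 * (k * z + k ^ 2 * t))) =
      ((∑' k : ℤ, Real.exp (-(2*t) * (k:ℝ)^2 + (2*γ*t - 2*z) * k)) -
       (∑' k : ℤ, Real.exp (-(2*t) * (k:ℝ)^2 + (-(2*γ*t) - 2*z) * k + (-(2*γ*z))))) / 2 := by
    intro γ z
    have hP : Summable fun k : ℤ =>
        Real.exp (-(2*t) * (k:ℝ)^2 + (2*γ*t - 2*z) * k) := by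
      have := summable_quad (2*t) (2*γ*t - 2*z) 0 h2t
      exact this.congr fun k => by congr 1; ring
    have hQ : Summable fun k : ℤ =>
        Real.exp (-(2*t) * (k:ℝ)^2 + (-(2*γ*t) - 2*z) * k + (-(2*γ*z))) :=
      summable_quad (2*t) _ _ h2t
    calc Real.exp (-(γ * z)) * ∑' k : ℤ,
          Real.sinh (γ * (2 * k * t + z)) * Real.exp (-(2 * (k * z + k ^ 2 * t)))
        = ∑' k : ℤ, Real.exp (-(γ * z)) *
            (Real.sinh (γ * (2 * k * t + z)) * Real.exp (-(2 * (k * z + k ^ 2 * t)))) :=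
          tsum_mul_left.symm
      _ = ∑' k : ℤ, (Real.exp (-(2*t) * (k:ℝ)^2 + (2*γ*t - 2*z) * k) -
            Real.exp (-(2*t) * (k:ℝ)^2 + (-(2*γ*t) - 2*z) * k + (-(2*γ*z)))) / 2 := by
          refine tsum_congr fun k => ?_
          rw [exp_mul_sinh_mul_exp]
          congr 2
          · congr 1; push_cast; ring
          · congr 1; push_cast; ring
      _ = ((∑' k : ℤ, Real.exp (-(2*t) * (k:ℝ)^2 + (2*γ*t - 2*z) * k)) -
           (∑' k : ℤ, Real.exp (-(2*t) * (k:ℝ)^2 + (-(2*γ*t) - 2*z) * k + (-(2*γ*z))))) / 2 := by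
          rw [tsum_div_const, Summable.tsum_sub hP hQ]
  have hAA : (∑' k : ℤ, Real.exp (-(2*t) * (k:ℝ)^2 + (2*β*t - 2*y) * k)) =
      ∑' k : ℤ, Real.exp (-(2*t) * (k:ℝ)^2 + (2*α*t - 2*x) * k) := by
    rw [← (Equiv.neg ℤ).tsum_eq
      (fun k : ℤ => Real.exp (-(2*t) * (k:ℝ)^2 + (2*α*t - 2*x) * k))]
    refine tsum_congr fun k => ?_
    simp only [Equiv.neg_apply]
    congr 1; push_cast; rw [hβ, hy]; ring
  have hBB : (∑' k : ℤ, Real.exp (-(2*t) * (k:ℝ)^2 + (-(2*β*t) - 2*y) * k + (-(2*β*y)))) =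
      ∑' k : ℤ, Real.exp (-(2*t) * (k:ℝ)^2 + (-(2*α*t) - 2*x) * k + (-(2*α*x))) := by
    rw [← ((Equiv.addRight (1 : ℤ)).trans (Equiv.neg ℤ)).tsum_eq
      (fun k : ℤ => Real.exp (-(2*t) * (k:ℝ)^2 + (-(2*α*t) - 2*x) * k + (-(2*α*x))))]
    refine tsum_congr fun k => ?_
    simp only [Equiv.trans_apply, Equiv.coe_addRight, Equiv.neg_apply]
    congr 1; push_cast; rw [hβ, hy]; ring
  have hsin : Real.sin (β * π) = Real.sin (α * π) := by
    rw [show β * π = π - α * π by rw [hβ]; ring, Real.sin_pi_sub]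
  show phi α t x = phi β t y
  rw [phi, phi, div_mul_eq_mul_div, div_mul_eq_mul_div, key α x, key β y, hAA, hBB, hsin]
end

section
/- For α ∈ (0,1), t > 0 and x ∈ ℝ, one has the Poisson-type summation identity (e^{-αx}/sin(απ)) ∑_{k∈ℤ} sinh(α(2kt+x)) e^{-2(kx+k²t)} = (√π e^{(x-αt)²/(2t)} / (√(2t) sin(απ))) ∑_{k∈ℤ} sin(kπα) sin(kπx/t) e^{-k²π²/(2t)}, both series being absolutely convergent. -/
/-!
Completing the square writes each term `sinh (α (2kt + x)) e^{-2(kx + k²t)}` as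
`e^{αx + (x - αt)²/(2t)} / 2` times the difference of the shifted Gaussians `e^{-2t(k - c)²}` at
`c = (αt - x)/(2t)` and `c = (-αt - x)/(2t)`. Poisson summation turns a shifted Gaussian sum into
`√(π/(2t)) ∑ₙ e^{-π²n²/(2t)} cos (2πcn)`, and
`cos p - cos q = -2 sin ((p+q)/2) sin ((p-q)/2)` turns the difference of the two cosine sums
into the sine series on the right.
-/

open Real

-- The summand is `e^{-ac²}` times the norm of a Jacobi theta term with `τ = ia/π`.
lemma summable_exp_neg_mul_int_sub_sq {a : ℝ} (ha : 0 < a) (c : ℝ) :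
    Summable fun n : ℤ => rexp (-a * (n - c) ^ 2) := by
  have hτ : 0 < (Complex.I * (a / π : ℝ)).im := by simpa using div_pos ha pi_pos
  have hθ := (summable_jacobiTheta₂_term_iff (Complex.I * (-(a * c / π) : ℝ)) _).mpr hτ
  refine (hθ.norm.mul_left (rexp (-a * c ^ 2))).congr fun n => ?_
  rw [norm_jacobiTheta₂_term, ← exp_add]
  congr 1
  simp only [Complex.mul_im, Complex.I_re, Complex.I_im, Complex.ofReal_re, Complex.ofReal_im]
  field_simp
  ring

lemma summable_exp_neg_mul_int_sq_mul_cos {b : ℝ} (hb : 0 < b) (θ : ℝ) :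
    Summable fun n : ℤ => rexp (-b * n ^ 2) * cos (θ * n) := by
  refine Summable.of_norm_bounded (summable_exp_neg_mul_int_sub_sq hb 0) fun n => ?_
  rw [Real.norm_eq_abs, abs_mul, abs_of_pos (exp_pos _), sub_zero]
  exact mul_le_of_le_one_right (exp_pos _).le (abs_cos_le_one _)

-- The real part of `Complex.tsum_exp_neg_quadratic` at `a = π / a`, `b = I c`.
lemma tsum_exp_neg_mul_int_sub_sq {a : ℝ} (ha : 0 < a) (c : ℝ) :
    ∑' n : ℤ, rexp (-a * (n - c) ^ 2) =
      √(π / a) * ∑' n : ℤ, rexp (-(π ^ 2 / a) * n ^ 2) * cos (2 * π * c * n) := by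
  have hpa : 0 < π / a := div_pos pi_pos ha
  have hpoisson := Complex.tsum_exp_neg_quadratic (a := (π / a : ℝ)) (by simpa using hpa)
    (Complex.I * c)
  have hsum : Summable fun n : ℤ =>
      Complex.exp (-π * (π / a : ℝ) * n ^ 2 + 2 * π * (Complex.I * c) * n) := by
    refine ((summable_jacobiTheta₂_term_iff c (Complex.I * (π / a : ℝ))).mpr
      (by simpa using hpa)).congr fun n => ?_
    rw [jacobiTheta₂_term]
    congr 1
    ring_nf
    rw [Complex.I_sq]
    ring
  have hsqrt : ((π / a : ℝ) : ℂ) ^ (1 / 2 : ℂ) = (√(π / a) : ℂ) := by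
    rw [show (1 / 2 : ℂ) = ((1 / 2 : ℝ) : ℂ) by norm_num, ← Complex.ofReal_cpow hpa.le,
      Real.sqrt_eq_rpow]
  have hgauss :
      ∑' n : ℤ, Complex.exp (-π / (π / a : ℝ) * (n + Complex.I * (Complex.I * c)) ^ 2) =
        (∑' n : ℤ, rexp (-a * (n - c) ^ 2) : ℝ) := by
    rw [Complex.ofReal_tsum]
    refine tsum_congr fun n => ?_
    rw [← mul_assoc, Complex.I_mul_I, Complex.ofReal_exp]
    congr 1
    push_cast
    field_simp
    ring
  have hre := congrArg Complex.re hpoisson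
  rw [Complex.re_tsum hsum, hsqrt, hgauss, ← Complex.ofReal_one, ← Complex.ofReal_div,
    ← Complex.ofReal_mul, Complex.ofReal_re] at hre
  have hdual (n : ℤ) :
      (Complex.exp (-π * (π / a : ℝ) * n ^ 2 + 2 * π * (Complex.I * c) * n)).re =
        rexp (-(π ^ 2 / a) * n ^ 2) * cos (2 * π * c * n) := by
    rw [show -π * (π / a : ℝ) * n ^ 2 + 2 * π * (Complex.I * c) * n
        = (-(π ^ 2 / a) * n ^ 2 : ℝ) + (2 * π * c * n : ℝ) * Complex.I by push_cast; ring,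
      Complex.exp_add, ← Complex.ofReal_exp, Complex.re_ofReal_mul, Complex.exp_ofReal_mul_I_re]
  rw [tsum_congr hdual] at hre
  rw [hre, ← mul_assoc, mul_one_div_cancel (Real.sqrt_pos.mpr hpa).ne', one_mul]

lemma sinh_mul_exp_eq (α t x k : ℝ) (ht : t ≠ 0) :
    sinh (α * (2 * k * t + x)) * rexp (-(2 * (k * x + k ^ 2 * t))) =
      rexp (α * x + (x - α * t) ^ 2 / (2 * t)) / 2 *
        (rexp (-(2 * t) * (k - (α * t - x) / (2 * t)) ^ 2) -
          rexp (-(2 * t) * (k - (-(α * t) - x) / (2 * t)) ^ 2)) := by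
  have h₁ : rexp (α * x + (x - α * t) ^ 2 / (2 * t)) *
      rexp (-(2 * t) * (k - (α * t - x) / (2 * t)) ^ 2) =
        rexp (α * (2 * k * t + x)) * rexp (-(2 * (k * x + k ^ 2 * t))) := by
    rw [← exp_add, ← exp_add]; congr 1; field_simp; ring
  have h₂ : rexp (α * x + (x - α * t) ^ 2 / (2 * t)) *
      rexp (-(2 * t) * (k - (-(α * t) - x) / (2 * t)) ^ 2) =
        rexp (-(α * (2 * k * t + x))) * rexp (-(2 * (k * x + k ^ 2 * t))) := by
    rw [← exp_add, ← exp_add]; congr 1; field_simp; ring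
  rw [sinh_eq]
  linear_combination (h₂ - h₁) / 2

lemma sin_mul_sin_mul_exp_eq (α t x k : ℝ) (ht : t ≠ 0) :
    sin (k * π * α) * sin (k * π * x / t) * rexp (-(k ^ 2 * π ^ 2) / (2 * t)) =
      (rexp (-(π ^ 2 / (2 * t)) * k ^ 2) * cos (2 * π * ((α * t - x) / (2 * t)) * k) -
        rexp (-(π ^ 2 / (2 * t)) * k ^ 2) * cos (2 * π * ((-(α * t) - x) / (2 * t)) * k)) /
          2 := by
  have h₁ : (2 * π * ((α * t - x) / (2 * t)) * k + 2 * π * ((-(α * t) - x) / (2 * t)) * k) / 2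
      = -(k * π * x / t) := by field_simp; ring
  have h₂ : (2 * π * ((α * t - x) / (2 * t)) * k - 2 * π * ((-(α * t) - x) / (2 * t)) * k) / 2
      = k * π * α := by field_simp; ring
  rw [← mul_sub, cos_sub_cos, h₁, h₂, sin_neg, show -(k ^ 2 * π ^ 2) / (2 * t) =
    -(π ^ 2 / (2 * t)) * k ^ 2 by ring]
  ring

theorem phi_poisson_summation_general (α t x : ℝ) (ht : 0 < t) :
    Summable (fun k : ℤ =>
      |Real.sinh (α * (2 * k * t + x)) * Real.exp (-(2 * (k * x + k ^ 2 * t)))|) ∧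
    Summable (fun k : ℤ =>
      |Real.sin (k * π * α) * Real.sin (k * π * x / t) * Real.exp (-(k ^ 2 * π ^ 2) / (2 * t))|) ∧
    Real.exp (-(α * x)) / Real.sin (α * π) *
        ∑' k : ℤ, Real.sinh (α * (2 * k * t + x)) * Real.exp (-(2 * (k * x + k ^ 2 * t))) =
      Real.sqrt π * Real.exp ((x - α * t) ^ 2 / (2 * t)) /
          (Real.sqrt (2 * t) * Real.sin (α * π)) *
        ∑' k : ℤ, Real.sin (k * π * α) * Real.sin (k * π * x / t) *
          Real.exp (-(k ^ 2 * π ^ 2) / (2 * t)) := by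
  have h2t : 0 < 2 * t := by positivity
  have hπ : 0 < π ^ 2 / (2 * t) := by positivity
  have hlhs (k : ℤ) := sinh_mul_exp_eq α t x k ht.ne'
  have hrhs (k : ℤ) := sin_mul_sin_mul_exp_eq α t x k ht.ne'
  have hg₁ := summable_exp_neg_mul_int_sub_sq h2t ((α * t - x) / (2 * t))
  have hg₂ := summable_exp_neg_mul_int_sub_sq h2t ((-(α * t) - x) / (2 * t))
  have hd₁ := summable_exp_neg_mul_int_sq_mul_cos hπ (2 * π * ((α * t - x) / (2 * t)))
  have hd₂ := summable_exp_neg_mul_int_sq_mul_cos hπ (2 * π * ((-(α * t) - x) / (2 * t)))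
  refine ⟨summable_abs_iff.mpr (((hg₁.sub hg₂).mul_left _).congr fun k => (hlhs k).symm),
    summable_abs_iff.mpr (((hd₁.sub hd₂).div_const 2).congr fun k => (hrhs k).symm), ?_⟩
  rw [tsum_congr hlhs, tsum_congr hrhs, tsum_mul_left, tsum_div_const, hg₁.tsum_sub hg₂,
    hd₁.tsum_sub hd₂, tsum_exp_neg_mul_int_sub_sq h2t, tsum_exp_neg_mul_int_sub_sq h2t,
    ← mul_sub, sqrt_div pi_pos.le, exp_add, exp_neg]
  generalize ((∑' n : ℤ, _) - ∑' n : ℤ, _ : ℝ) = D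
  field_simp

theorem phi_poisson_summation (α t x : ℝ) (hα0 : 0 < α) (hα1 : α < 1) (ht : 0 < t) :
    Summable (fun k : ℤ =>
      |Real.sinh (α * (2 * k * t + x)) * Real.exp (-(2 * (k * x + k ^ 2 * t)))|) ∧
    Summable (fun k : ℤ =>
      |Real.sin (k * π * α) * Real.sin (k * π * x / t) * Real.exp (-(k ^ 2 * π ^ 2) / (2 * t))|) ∧
    Real.exp (-(α * x)) / Real.sin (α * π) *
        ∑' k : ℤ, Real.sinh (α * (2 * k * t + x)) * Real.exp (-(2 * (k * x + k ^ 2 * t))) =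
      Real.sqrt π * Real.exp ((x - α * t) ^ 2 / (2 * t)) /
          (Real.sqrt (2 * t) * Real.sin (α * π)) *
        ∑' k : ℤ, Real.sin (k * π * α) * Real.sin (k * π * x / t) *
          Real.exp (-(k ^ 2 * π ^ 2) / (2 * t)) :=
  phi_poisson_summation_general α t x ht
end

section
/- Let π : [0,T] → ℝ be Lipschitz with constant L and π(0) = 0. Then the Pitman transform P₁π(t) = π(t) - 2 inf_{0≤s≤t} π(s) is Lipschitz with constant L, and P₀π(t) = π(t) + 2 inf_{0≤s≤t}(s - π(s)) is Lipschitz with constant L + 2. -/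
/-!
Let `m t = inf_{[0,t]} g` for a `K`-Lipschitz `g` and take `y ≤ x`. Since `m` is antitone, the
increment of `g - 2m` from `y` to `x` is at least `-K (x - y)`. For the upper bound, either
`m x = m y`, or the infimum over `[0,x]` is attained at some `u ∈ (y,x]`; then `m y ≤ g y` gives
`g x - g y + 2 (m y - m x) ≤ (g x - g u) + (g y - g u) ≤ K (x - u) + K (u - y) = K (x - y)`.
The second transform of `g` is `t - P₁(id - g)(t)`, and `id - g` is `(K + 1)`-Lipschitz.
-/

open Set NNReal

variable {K : ℝ≥0} {f : ℝ → ℝ}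

lemma LipschitzOnWith.abs_sub_le_mul_sub {s : Set ℝ} (hf : LipschitzOnWith K f s) {x y : ℝ}
    (hx : x ∈ s) (hy : y ∈ s) (hyx : y ≤ x) : |f x - f y| ≤ K * (x - y) := by
  simpa [Real.dist_eq, abs_of_nonneg (sub_nonneg.2 hyx)] using hf.dist_le_mul x hx y hy

lemma lipschitzOnWith_of_abs_sub_le_mul_sub {s : Set ℝ}
    (h : ∀ x ∈ s, ∀ y ∈ s, y ≤ x → |f x - f y| ≤ K * (x - y)) : LipschitzOnWith K f s := by
  refine lipschitzOnWith_iff_dist_le_mul.2 fun x hx y hy => ?_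
  rw [Real.dist_eq, Real.dist_eq]
  rcases le_total y x with hyx | hxy
  · simpa [abs_of_nonneg (sub_nonneg.2 hyx)] using h x hx y hy hyx
  · simpa [abs_sub_comm, abs_of_nonpos (sub_nonpos.2 hxy)] using h y hy x hx hxy

noncomputable def runningInf (g : ℝ → ℝ) (t : ℝ) : ℝ := sInf (g '' Icc 0 t)

section RunningInf

variable {g : ℝ → ℝ} {T : ℝ} (hg : ContinuousOn g (Icc 0 T))
include hg

lemma runningInf_le {s t : ℝ} (hs : s ∈ Icc 0 t) (htT : t ≤ T) : runningInf g t ≤ g s :=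
  csInf_le ((isCompact_Icc.image_of_continuousOn (hg.mono (Icc_subset_Icc_right htT))).bddBelow)
    (mem_image_of_mem g hs)

lemma exists_eq_runningInf {t : ℝ} (ht : t ∈ Icc 0 T) : ∃ u ∈ Icc 0 t, g u = runningInf g t :=
  (isCompact_Icc.image_of_continuousOn (hg.mono (Icc_subset_Icc_right ht.2))).sInf_mem
    ((nonempty_Icc.2 ht.1).image g)

lemma runningInf_antitoneOn : AntitoneOn (runningInf g) (Icc 0 T) := by
  intro s hs t ht hst
  refine le_csInf ((nonempty_Icc.2 hs.1).image g) (forall_mem_image.2 fun v hv => ?_)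
  exact runningInf_le hg ⟨hv.1, hv.2.trans hst⟩ ht.2

end RunningInf

namespace LipschitzOnWith

variable {g : ℝ → ℝ} {T : ℝ} (hg : LipschitzOnWith K g (Icc 0 T))
include hg

lemma sub_two_mul_runningInf_sub_le {x y : ℝ} (hx : x ∈ Icc 0 T) (hy : y ∈ Icc 0 T) (hyx : y ≤ x) :
    (g x - 2 * runningInf g x) - (g y - 2 * runningInf g y) ≤ K * (x - y) := by
  have hc := hg.continuousOn
  have hmono := runningInf_antitoneOn hc hy hx hyx
  have hgxy := (abs_le.1 (hg.abs_sub_le_mul_sub hx hy hyx)).2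
  obtain ⟨u, hu, hgu⟩ := exists_eq_runningInf hc hx
  rcases le_or_gt u y with huy | hyu
  · have : runningInf g y ≤ runningInf g x := hgu ▸ runningInf_le hc ⟨hu.1, huy⟩ hy.2
    linarith
  · have huT : u ∈ Icc 0 T := ⟨hu.1, hu.2.trans hx.2⟩
    have hmy := runningInf_le hc ⟨hy.1, le_rfl⟩ hy.2
    have hgxu := (abs_le.1 (hg.abs_sub_le_mul_sub hx huT hu.2)).2
    have hgyu := (abs_le.1 (hg.abs_sub_le_mul_sub huT hy hyu.le)).1
    linarith

lemma sub_two_mul_runningInf :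
    LipschitzOnWith K (fun t => g t - 2 * runningInf g t) (Icc 0 T) := by
  refine lipschitzOnWith_of_abs_sub_le_mul_sub fun x hx y hy hyx => abs_le.2 ⟨?_, ?_⟩
  · have hmono := runningInf_antitoneOn hg.continuousOn hy hx hyx
    have hgxy := (abs_le.1 (hg.abs_sub_le_mul_sub hx hy hyx)).1
    linarith
  · exact hg.sub_two_mul_runningInf_sub_le hx hy hyx

lemma add_two_mul_runningInf_id_sub :
    LipschitzOnWith (K + 2) (fun t => g t + 2 * runningInf (fun s => s - g s) t) (Icc 0 T) := by
  have hid : LipschitzOnWith 1 (fun t : ℝ => t) (Icc 0 T) := LipschitzWith.id.lipschitzOnWith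
  have h := hid.sub (hid.sub hg).sub_two_mul_runningInf
  have heq : (fun t => g t + 2 * runningInf (fun s => s - g s) t) =
      fun t => t - ((t - g t) - 2 * runningInf (fun s => s - g s) t) := by
    funext t
    ring
  rwa [heq, show K + 2 = 1 + (1 + K) by ring]

end LipschitzOnWith

theorem pitman_transforms_lipschitz_general (T : ℝ) (L : NNReal)
    (f : ℝ → ℝ) (hf : LipschitzOnWith L f (Set.Icc 0 T)) :
    LipschitzOnWith L (fun t => f t - 2 * sInf (f '' Set.Icc 0 t)) (Set.Icc 0 T) ∧
    LipschitzOnWith (L + 2)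
      (fun t => f t + 2 * sInf ((fun s => s - f s) '' Set.Icc 0 t)) (Set.Icc 0 T) :=
  ⟨hf.sub_two_mul_runningInf, hf.add_two_mul_runningInf_id_sub⟩

theorem pitman_transforms_lipschitz (T : ℝ) (hT : 0 ≤ T) (L : NNReal)
    (f : ℝ → ℝ) (h0 : f 0 = 0) (hf : LipschitzOnWith L f (Set.Icc 0 T)) :
    LipschitzOnWith L (fun t => f t - 2 * sInf (f '' Set.Icc 0 t)) (Set.Icc 0 T) ∧
    LipschitzOnWith (L + 2)
      (fun t => f t + 2 * sInf ((fun s => s - f s) '' Set.Icc 0 t)) (Set.Icc 0 T) :=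
  pitman_transforms_lipschitz_general T L f hf
end

section
/- Let μ ∈ (0,1), let (ε_n)_{n≥0} be independent exponential random variables with parameter 1, and for k ≥ 1 set ξ_k = k ∑_{n=k}^∞ 2ε_n/(n(n+1) + (1-2μ)ν_n), where ν_n = n for n even and ν_n = -(n+1) for n odd. Then each ξ_k is almost surely finite and ξ_k → 2 almost surely as k → ∞. -/
/-!
Almost surely `ε n ≥ 0` for all `n` and, by the strong law of large numbers, the partial sums
`S N = ε 0 + ⋯ + ε (N - 1)` satisfy `S N = N + o(N)`. Since `|ν n| ≤ n + 1`, the weights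
`w n = 2 / (n (n + 1) + (1 - 2μ) ν n)` are `2 / (n (n + 1)) + O(n⁻³)`; hence `k ∑_{n ≥ k} w n → 2`
by telescoping, and `w n = O(n⁻²)`, `w (n + 1) - w n = O(n⁻³)`. Summation by parts against
`S n - n` then bounds `k ∑_{n ≥ k} w n (ε n - 1)` by a constant times `sup_{j ≥ k} |S j - j| / j`,
which tends to `0`. The same estimate for `S n ≤ C n` gives summability of the nonnegative series.
-/

open Filter MeasureTheory ProbabilityTheory

/-- `ν n = n` for `n` even, `-(n+1)` for `n` odd. -/
noncomputable def nu (n : ℕ) : ℝ := if Even n then (n : ℝ) else -((n : ℝ) + 1)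

open Finset Topology

theorem sum_Ico_inv_sq_le {k : ℕ} (hk : 1 ≤ k) (L : ℕ) :
    ∑ i ∈ Ico k L, ((i : ℝ) ^ 2)⁻¹ ≤ 2 / k := by
  obtain ⟨j, rfl⟩ := Nat.exists_eq_add_of_le' hk
  rw [Ico_add_one_left_eq_Ioo]
  simpa using sum_Ioo_inv_sq_le (α := ℝ) j L

theorem hasSum_inv_mul_succ_tail {k : ℕ} (hk : 1 ≤ k) :
    HasSum (fun n : ℕ => (((n + k : ℕ) : ℝ) * ((n + k : ℕ) + 1))⁻¹) (k : ℝ)⁻¹ := by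
  have hsplit : ∀ n : ℕ, (((n + k : ℕ) : ℝ) * ((n + k : ℕ) + 1))⁻¹
      = ((n + k : ℕ) : ℝ)⁻¹ - ((n + 1 + k : ℕ) : ℝ)⁻¹ := by
    intro n
    have : (0 : ℝ) < ((n + k : ℕ) : ℝ) := by positivity
    push_cast at this ⊢
    field_simp
    ring
  rw [hasSum_iff_tendsto_nat_of_nonneg (fun n => by positivity)]
  simp only [hsplit, sum_range_sub']
  have h : Tendsto (fun N : ℕ => ((N + k : ℕ) : ℝ)⁻¹) atTop (𝓝 0) :=
    tendsto_inv_atTop_zero.comp (tendsto_natCast_atTop_atTop.comp (tendsto_add_atTop_nat k))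
  simpa using h.const_sub (k : ℝ)⁻¹

section AbelSummation

variable {v y : ℕ → ℝ} {A D : ℝ} {k : ℕ}

theorem abs_sum_Ico_sub_mul_le (hk : 1 ≤ k)
    (hdv : ∀ m, k ≤ m → |v (m + 1) - v m| ≤ A / m ^ 3)
    {s : ℕ → ℝ} (hs : ∀ j, k ≤ j → |s (j + 1)| ≤ D * j) (L : ℕ) :
    |∑ i ∈ Ico k L, (v (i + 1) - v i) * s (i + 1)| ≤ 2 * A * D / k := by
  have hk0 : (0 : ℝ) < k := by exact_mod_cast hk
  have hA : 0 ≤ A := by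
    have := mul_nonneg ((abs_nonneg _).trans (hdv k le_rfl)) (pow_nonneg hk0.le 3)
    rwa [div_mul_cancel₀ _ (by positivity)] at this
  have hD : 0 ≤ D := nonneg_of_mul_nonneg_left ((abs_nonneg _).trans (hs k le_rfl)) hk0
  calc |∑ i ∈ Ico k L, (v (i + 1) - v i) * s (i + 1)|
      ≤ ∑ i ∈ Ico k L, A * D * ((i : ℝ) ^ 2)⁻¹ := by
        refine (abs_sum_le_sum_abs _ _).trans (sum_le_sum fun i hi => ?_)
        have hki := (mem_Ico.1 hi).1
        have hi0 : (0 : ℝ) < i := hk0.trans_le (by exact_mod_cast hki)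
        calc |(v (i + 1) - v i) * s (i + 1)| ≤ A / i ^ 3 * (D * i) := by
              rw [abs_mul]
              exact mul_le_mul (hdv i hki) (hs i hki) (abs_nonneg _) (by positivity)
          _ = A * D * ((i : ℝ) ^ 2)⁻¹ := by field_simp
    _ ≤ A * D * (2 / k) := by
        rw [← mul_sum]; exact mul_le_mul_of_nonneg_left (sum_Ico_inv_sq_le hk L) (by positivity)
    _ = 2 * A * D / k := by ring

theorem abs_sum_Ico_mul_le (hk : 1 ≤ k)
    (hv : ∀ m, k ≤ m → |v m| ≤ A / m ^ 2)
    (hdv : ∀ m, k ≤ m → |v (m + 1) - v m| ≤ A / m ^ 3)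
    (hy : ∀ j, k ≤ j → |∑ i ∈ range j, y i| ≤ D * j) (K : ℕ) :
    |∑ i ∈ Ico k K, v i * y i| ≤ 7 * A * D / k := by
  set G : ℕ → ℝ := fun j => ∑ i ∈ range j, y i
  have hk0 : (0 : ℝ) < k := by exact_mod_cast hk
  have hA : 0 ≤ A := by
    have := mul_nonneg ((abs_nonneg _).trans (hv k le_rfl)) (sq_nonneg (k : ℝ))
    rwa [div_mul_cancel₀ _ (by positivity)] at this
  have hD : 0 ≤ D := nonneg_of_mul_nonneg_left ((abs_nonneg _).trans (hy k le_rfl)) hk0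
  rcases le_or_gt K k with hK | hK
  · rw [Ico_eq_empty_of_le hK, sum_empty, abs_zero]
    positivity
  obtain ⟨L, rfl⟩ : ∃ L, K = L + 1 := ⟨K - 1, by omega⟩
  have hkL : k ≤ L := by omega
  have hL0 : (0 : ℝ) < L := hk0.trans_le (by exact_mod_cast hkL)
  have hG : ∀ j, k ≤ j → |G (j + 1)| ≤ 2 * D * j := fun j hj => by
    have hj : (1 : ℝ) ≤ j := by exact_mod_cast hk.trans hj
    have := hy (j + 1) (by omega)
    push_cast at this
    nlinarith
  have h_top : |v L * G (L + 1)| ≤ 2 * A * D / k := by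
    calc |v L * G (L + 1)| ≤ A / L ^ 2 * (2 * D * L) := by
          rw [abs_mul]; exact mul_le_mul (hv L hkL) (hG L hkL) (abs_nonneg _) (by positivity)
      _ = 2 * A * D / L := by field_simp
      _ ≤ 2 * A * D / k := by gcongr
  have h_bot : |v k * G k| ≤ A * D / k := by
    calc |v k * G k| ≤ A / k ^ 2 * (D * k) := by
          rw [abs_mul]; exact mul_le_mul (hv k le_rfl) (hy k le_rfl) (abs_nonneg _) (by positivity)
      _ = A * D / k := by field_simp
  have h_mid := abs_sum_Ico_sub_mul_le hk hdv hG L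
  have hparts := sum_Ico_by_parts v y hK
  simp only [smul_eq_mul, Nat.add_sub_cancel] at hparts
  rw [hparts]
  calc _ ≤ |v L * G (L + 1)| + |v k * G k| + |∑ i ∈ Ico k L, (v (i + 1) - v i) * G (i + 1)| :=
        (abs_sub _ _).trans (add_le_add_left (abs_sub _ _) _)
    _ ≤ 2 * A * D / k + A * D / k + 2 * A * (2 * D) / k := by gcongr
    _ = 7 * A * D / k := by ring

theorem abs_tsum_tail_mul_le (hk : 1 ≤ k)
    (hv : ∀ m, k ≤ m → |v m| ≤ A / m ^ 2)
    (hdv : ∀ m, k ≤ m → |v (m + 1) - v m| ≤ A / m ^ 3)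
    (hy : ∀ j, k ≤ j → |∑ i ∈ range j, y i| ≤ D * j)
    (hs : Summable fun n => v (n + k) * y (n + k)) :
    |∑' n, v (n + k) * y (n + k)| ≤ 7 * A * D / k :=
  le_of_tendsto' hs.hasSum.tendsto_sum_nat.abs fun N => by
    rw [range_eq_Ico, sum_Ico_add' (fun i => v i * y i), zero_add]
    exact abs_sum_Ico_mul_le hk hv hdv hy _

theorem summable_tail_mul_of_nonneg (hk : 1 ≤ k)
    (hv : ∀ m, k ≤ m → |v m| ≤ A / m ^ 2)
    (hdv : ∀ m, k ≤ m → |v (m + 1) - v m| ≤ A / m ^ 3)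
    (hy0 : ∀ n, 0 ≤ y n) (hy : ∀ j, k ≤ j → |∑ i ∈ range j, y i| ≤ D * j) :
    Summable fun n => v (n + k) * y (n + k) := by
  have hv' : ∀ m, k ≤ m → |(|v m|)| ≤ A / m ^ 2 :=
    fun m hm => (abs_abs (v m)).trans_le (hv m hm)
  have hdv' : ∀ m, k ≤ m → |(|v (m + 1)| - |v m|)| ≤ A / m ^ 3 :=
    fun m hm => (abs_abs_sub_abs_le_abs_sub _ _).trans (hdv m hm)
  refine Summable.of_norm (summable_of_sum_range_le (c := 7 * A * D / k)
    (fun n => norm_nonneg _) fun N => ?_)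
  simp only [norm_mul, Real.norm_eq_abs, abs_of_nonneg (hy0 _)]
  rw [range_eq_Ico, sum_Ico_add' (fun i => |v i| * y i), zero_add]
  exact (le_abs_self _).trans (abs_sum_Ico_mul_le hk hv' hdv' hy _)

end AbelSummation

section Weights

variable {w : ℕ → ℝ} {c B : ℝ}
  (hw : ∀ m : ℕ, 1 ≤ m → |w m - c / (m * (m + 1))| ≤ B / m ^ 3)
include hw

theorem nonneg_of_abs_sub_le : 0 ≤ B := by
  simpa using (abs_nonneg _).trans (hw 1 le_rfl)

theorem abs_le_of_abs_sub_le {m : ℕ} (hm : 1 ≤ m) : |w m| ≤ 2 * (|c| + B) / m ^ 2 := by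
  have hB := nonneg_of_abs_sub_le hw
  have hm' : (1 : ℝ) ≤ m := by exact_mod_cast hm
  have hm0 : (0 : ℝ) < m := by linarith
  have hc : |c / (m * (m + 1))| ≤ |c| / m ^ 2 := by
    rw [abs_div, abs_of_pos (a := (m : ℝ) * (m + 1)) (by positivity)]
    exact div_le_div_of_nonneg_left (abs_nonneg c) (by positivity) (by nlinarith)
  have hB' : B / m ^ 3 ≤ B / m ^ 2 :=
    div_le_div_of_nonneg_left hB (by positivity) (by nlinarith)
  calc |w m| ≤ |w m - c / (m * (m + 1))| + |c / (m * (m + 1))| := by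
        linarith [abs_sub_abs_le_abs_sub (w m) (c / (m * (m + 1)))]
    _ ≤ B / m ^ 2 + |c| / m ^ 2 := by linarith [hw m hm]
    _ ≤ 2 * (|c| + B) / m ^ 2 := by
      rw [← add_div]; gcongr; linarith [abs_nonneg c]

theorem abs_sub_succ_le_of_abs_sub_le {m : ℕ} (hm : 1 ≤ m) :
    |w (m + 1) - w m| ≤ 2 * (|c| + B) / m ^ 3 := by
  have hB := nonneg_of_abs_sub_le hw
  have hm0 : (0 : ℝ) < m := by exact_mod_cast hm
  have h_succ := hw (m + 1) (by omega)
  push_cast at h_succ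
  have hB' : B / ((m : ℝ) + 1) ^ 3 ≤ B / m ^ 3 :=
    div_le_div_of_nonneg_left hB (by positivity) (by gcongr; linarith)
  have hh : |c / ((m + 1) * (m + 1 + 1)) - c / (m * (m + 1))| ≤ 2 * |c| / m ^ 3 := by
    have : c / ((m + 1) * (m + 1 + 1)) - c / (m * (m + 1))
        = -(2 * c) / (m * (m + 1) * (m + 2)) := by
      field_simp; ring
    rw [this, abs_div, abs_neg, abs_mul, abs_two,
      abs_of_pos (a := (m : ℝ) * (m + 1) * (m + 2)) (by positivity)]
    exact div_le_div_of_nonneg_left (by positivity) (by positivity) (by nlinarith)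
  calc |w (m + 1) - w m|
      ≤ |w (m + 1) - c / ((m + 1) * (m + 1 + 1))| + |w m - c / (m * (m + 1))|
        + |c / ((m + 1) * (m + 1 + 1)) - c / (m * (m + 1))| := by
        have := abs_sub_le (w (m + 1)) (c / ((m + 1) * (m + 1 + 1))) (w m)
        linarith [abs_sub_le (c / ((m + 1) * (m + 1 + 1))) (c / (m * (m + 1))) (w m),
          abs_sub_comm (c / (m * (m + 1))) (w m)]
    _ ≤ B / m ^ 3 + B / m ^ 3 + 2 * |c| / m ^ 3 := by
        gcongr
        · exact h_succ.trans hB'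
        · exact hw m hm
    _ = 2 * (|c| + B) / m ^ 3 := by ring

theorem summable_tail_of_abs_sub_le {k : ℕ} (hk : 1 ≤ k) : Summable fun n => w (n + k) := by
  simpa using summable_tail_mul_of_nonneg (y := fun _ => 1) (D := 1) hk
    (fun m hm => abs_le_of_abs_sub_le hw (hk.trans hm))
    (fun m hm => abs_sub_succ_le_of_abs_sub_le hw (hk.trans hm)) (fun _ => zero_le_one)
    (fun j _ => by simp)

theorem abs_mul_tsum_sub_le {k : ℕ} (hk : 1 ≤ k) : |k * ∑' n, w (n + k) - c| ≤ 2 * B / k := by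
  have hB := nonneg_of_abs_sub_le hw
  have hk0 : (0 : ℝ) < k := by exact_mod_cast hk
  set p : ℕ → ℝ := fun n => (((n + k : ℕ) : ℝ) * ((n + k : ℕ) + 1))⁻¹
  have hp : HasSum p (k : ℝ)⁻¹ := hasSum_inv_mul_succ_tail hk
  have hcp : HasSum (fun n => c / (((n + k : ℕ) : ℝ) * ((n + k : ℕ) + 1))) (c / k) := by
    simpa only [div_eq_mul_inv] using hp.mul_left c
  have hdev : ∀ n, ‖w (n + k) - c / (((n + k : ℕ) : ℝ) * ((n + k : ℕ) + 1))‖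
      ≤ 2 * B / k * p n := by
    intro n
    have hkm : (k : ℝ) ≤ ((n + k : ℕ) : ℝ) := by exact_mod_cast Nat.le_add_left k n
    refine (hw (n + k) (by omega)).trans ?_
    simp only [p]
    set m : ℝ := ((n + k : ℕ) : ℝ)
    have hm1 : 1 ≤ m := le_trans (by exact_mod_cast hk) hkm
    rw [← div_eq_mul_inv, div_div, div_le_div_iff₀ (by positivity) (by positivity)]
    nlinarith [mul_le_mul_of_nonneg_left hkm (by positivity : (0 : ℝ) ≤ B * m * (m + 1)),
      mul_nonneg (by positivity : (0 : ℝ) ≤ B * m ^ 2) (sub_nonneg.2 hm1)]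
  have hdiff : |∑' n, w (n + k) - c / k| ≤ 2 * B / k * (k : ℝ)⁻¹ := by
    rw [← ((summable_tail_of_abs_sub_le hw hk).hasSum.sub hcp).tsum_eq]
    exact tsum_of_norm_bounded (hp.mul_left _) hdev
  calc |k * ∑' n, w (n + k) - c| = k * |∑' n, w (n + k) - c / k| := by
        rw [← abs_of_pos hk0, ← abs_mul, abs_of_pos hk0, mul_sub, mul_div_cancel₀ _ hk0.ne']
    _ ≤ k * (2 * B / k * (k : ℝ)⁻¹) := by gcongr
    _ = 2 * B / k := by field_simp

theorem tendsto_mul_tsum_of_abs_sub_le :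
    Tendsto (fun k : ℕ => (k : ℝ) * ∑' n, w (n + k)) atTop (𝓝 c) := by
  refine tendsto_sub_nhds_zero_iff.1
    (squeeze_zero_norm' ?_ (tendsto_const_div_atTop_nhds_zero_nat (2 * B)))
  filter_upwards [eventually_ge_atTop 1] with k hk
  exact abs_mul_tsum_sub_le hw hk

theorem tendsto_mul_tsum_mul_of_tendsto_average_zero {y : ℕ → ℝ}
    (hy : Tendsto (fun j : ℕ => (∑ i ∈ range j, y i) / j) atTop (𝓝 0))
    (hsum : ∀ k, 1 ≤ k → Summable fun n => w (n + k) * y (n + k)) :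
    Tendsto (fun k : ℕ => (k : ℝ) * ∑' n, w (n + k) * y (n + k)) atTop (𝓝 0) := by
  set A := 2 * (|c| + B)
  have hA : 0 ≤ A := by have := nonneg_of_abs_sub_le hw; positivity
  refine Metric.tendsto_atTop.2 fun ε hε => ?_
  set δ := ε / (7 * A + 1)
  obtain ⟨M, hM⟩ := Metric.tendsto_atTop.1 hy δ (by positivity)
  refine ⟨max M 1, fun k hk => ?_⟩
  have hk1 : 1 ≤ k := le_of_max_le_right hk
  have hk0 : (0 : ℝ) < k := by exact_mod_cast hk1
  have hG : ∀ j, k ≤ j → |∑ i ∈ range j, y i| ≤ δ * j := fun j hj => by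
    have hj0 : (0 : ℝ) < j := hk0.trans_le (by exact_mod_cast hj)
    have := (hM j ((le_max_left M 1).trans (hk.trans hj))).le
    rwa [Real.dist_eq, sub_zero, abs_div, abs_of_pos hj0, div_le_iff₀ hj0] at this
  have htail := abs_tsum_tail_mul_le hk1 (fun m hm => abs_le_of_abs_sub_le hw (hk1.trans hm))
    (fun m hm => abs_sub_succ_le_of_abs_sub_le hw (hk1.trans hm)) hG (hsum k hk1)
  calc dist ((k : ℝ) * ∑' n, w (n + k) * y (n + k)) 0
      = k * |∑' n, w (n + k) * y (n + k)| := by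
        rw [Real.dist_eq, sub_zero, abs_mul, abs_of_pos hk0]
    _ ≤ k * (7 * A * δ / k) := by gcongr
    _ = 7 * A * δ := by field_simp
    _ < ε := by
      have hδ : δ * (7 * A + 1) = ε := div_mul_cancel₀ ε (by positivity)
      nlinarith [div_pos hε (by positivity : (0 : ℝ) < 7 * A + 1)]

variable {x : ℕ → ℝ} {a : ℝ} (hx0 : ∀ n, 0 ≤ x n)
  (hx : Tendsto (fun N : ℕ => (∑ i ∈ range N, x i) / N) atTop (𝓝 a))
include hx0 hx

theorem summable_tail_mul_of_tendsto_average {k : ℕ} (hk : 1 ≤ k) :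
    Summable fun n => w (n + k) * x (n + k) := by
  obtain ⟨C, hC⟩ := hx.abs.bddAbove_range
  refine summable_tail_mul_of_nonneg (D := C) hk (fun m hm => abs_le_of_abs_sub_le hw (hk.trans hm))
    (fun m hm => abs_sub_succ_le_of_abs_sub_le hw (hk.trans hm)) hx0 fun j hj => ?_
  have hj0 : (0 : ℝ) < j := by exact_mod_cast hk.trans hj
  have := hC (Set.mem_range_self j)
  rwa [abs_div, abs_of_pos hj0, div_le_iff₀ hj0] at this

theorem tendsto_mul_tsum_mul_of_tendsto_average :
    Tendsto (fun k : ℕ => (k : ℝ) * ∑' n, w (n + k) * x (n + k)) atTop (𝓝 (c * a)) := by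
  set y : ℕ → ℝ := fun n => x n - a
  have hy : Tendsto (fun j : ℕ => (∑ i ∈ range j, y i) / j) atTop (𝓝 0) := by
    refine (sub_self a ▸ hx.sub_const a).congr' ?_
    filter_upwards [eventually_ge_atTop 1] with j hj
    have hj0 : (j : ℝ) ≠ 0 := by positivity
    simp only [y, sum_sub_distrib, sum_const, card_range, nsmul_eq_mul]
    field_simp
  have hsum_y : ∀ k, 1 ≤ k → Summable fun n => w (n + k) * y (n + k) := fun k hk => by
    simpa [y, mul_sub] using (summable_tail_mul_of_tendsto_average hw hx0 hx hk).sub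
      ((summable_tail_of_abs_sub_le hw hk).mul_right a)
  have h_fluct := tendsto_mul_tsum_mul_of_tendsto_average_zero hw hy hsum_y
  refine ((h_fluct.add ((tendsto_mul_tsum_of_abs_sub_le hw).const_mul a)).congr' ?_).trans
    (by rw [zero_add, mul_comm])
  filter_upwards [eventually_ge_atTop 1] with k hk
  rw [← mul_left_comm, ← mul_add, ← tsum_mul_left,
    ← (hsum_y k hk).tsum_add ((summable_tail_of_abs_sub_le hw hk).mul_left a)]
  exact congrArg _ (tsum_congr fun n => by ring)

end Weights

section Exponential

variable {r : ℝ}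

theorem ae_nonneg_expMeasure : ∀ᵐ x ∂expMeasure r, 0 ≤ x := by
  simp only [ae_iff, not_le]
  exact (withDensity_apply _ measurableSet_Iio).trans (lintegral_gammaPDF_of_nonpos le_rfl)

theorem toReal_exponentialPDF_smul_eq_indicator (hr : 0 < r) (g : ℝ → ℝ) (x : ℝ) :
    (exponentialPDF r x).toReal • g x
      = (Set.Ici 0).indicator (fun t => r * Real.exp (-(r * t)) * g t) x := by
  by_cases hx : 0 ≤ x
  · simp [exponentialPDF_eq, hx, ENNReal.toReal_ofReal, hr.le, (Real.exp_pos _).le]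
  · simp [exponentialPDF_eq, hx]

theorem measurable_exponentialPDF : Measurable (exponentialPDF r) :=
  (measurable_exponentialPDFReal r).ennreal_ofReal

theorem expMeasure_eq_withDensity : expMeasure r = volume.withDensity (exponentialPDF r) := rfl

theorem integrable_expMeasure_iff (hr : 0 < r) {g : ℝ → ℝ} :
    Integrable g (expMeasure r)
      ↔ IntegrableOn (fun t => r * Real.exp (-(r * t)) * g t) (Set.Ioi 0) := by
  rw [expMeasure_eq_withDensity, integrable_withDensity_iff_integrable_smul'
    measurable_exponentialPDF (ae_of_all _ fun _ => ENNReal.ofReal_lt_top)]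
  simp only [toReal_exponentialPDF_smul_eq_indicator hr]
  rw [integrable_indicator_iff measurableSet_Ici, integrableOn_Ici_iff_integrableOn_Ioi]

theorem integral_expMeasure_eq (hr : 0 < r) (g : ℝ → ℝ) :
    ∫ x, g x ∂expMeasure r = ∫ t in Set.Ioi 0, r * Real.exp (-(r * t)) * g t := by
  rw [expMeasure_eq_withDensity, integral_withDensity_eq_integral_toReal_smul
    measurable_exponentialPDF (ae_of_all _ fun _ => ENNReal.ofReal_lt_top)]
  simp only [toReal_exponentialPDF_smul_eq_indicator hr]
  rw [integral_indicator measurableSet_Ici, integral_Ici_eq_integral_Ioi]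

theorem integrable_id_expMeasure (hr : 0 < r) : Integrable id (expMeasure r) := by
  rw [integrable_expMeasure_iff hr]
  have : IntegrableOn (fun t : ℝ => r * (t ^ (1 : ℝ) * Real.exp (-r * t ^ (1 : ℝ))))
      (Set.Ioi 0) :=
    (integrableOn_rpow_mul_exp_neg_mul_rpow (by norm_num) one_pos hr).const_mul r
  refine this.congr_fun (fun t _ => ?_) measurableSet_Ioi
  simp only [Real.rpow_one, id, neg_mul]
  ring

theorem integral_id_expMeasure (hr : 0 < r) : ∫ x, x ∂expMeasure r = r⁻¹ := by
  rw [integral_expMeasure_eq hr]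
  have h := Real.integral_rpow_mul_exp_neg_mul_Ioi (a := 2) two_pos hr
  norm_num [Real.Gamma_two] at h
  simp_rw [mul_assoc, mul_comm (Real.exp _)]
  rw [integral_const_mul, h]
  field_simp

end Exponential

noncomputable def stringDenom (μ : ℝ) (n : ℕ) : ℝ := n * (n + 1) + (1 - 2 * μ) * nu n

theorem abs_nu_le (n : ℕ) : |nu n| ≤ n + 1 := by
  unfold nu
  split_ifs
  · rw [abs_of_nonneg (Nat.cast_nonneg n)]; linarith
  · rw [abs_neg, abs_of_pos (by positivity)]

section StringWeights

variable {μ : ℝ} (hμ0 : 0 < μ) (hμ1 : μ < 1)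
include hμ0 hμ1

theorem mul_sq_le_stringDenom {n : ℕ} (hn : 1 ≤ n) : μ * n ^ 2 ≤ stringDenom μ n := by
  have h1 : (1 : ℝ) ≤ n := by exact_mod_cast hn
  unfold stringDenom nu
  split_ifs
  · nlinarith
  · nlinarith [mul_nonneg (by linarith : (0 : ℝ) ≤ 1 - μ)
      (by nlinarith : (0 : ℝ) ≤ (n : ℝ) ^ 2 - 1)]

theorem abs_two_div_stringDenom_sub_le {n : ℕ} (hn : 1 ≤ n) :
    |2 / stringDenom μ n - 2 / (n * (n + 1))| ≤ 4 / μ / n ^ 3 := by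
  have h1 : (1 : ℝ) ≤ n := by exact_mod_cast hn
  set d := stringDenom μ n
  have hd : μ * n ^ 2 ≤ d := mul_sq_le_stringDenom hμ0 hμ1 hn
  have hd0 : 0 < d := lt_of_lt_of_le (by positivity) hd
  have hdev : |(n : ℝ) * (n + 1) - d| ≤ 2 * n := by
    have : |1 - 2 * μ| ≤ 1 := abs_le.2 ⟨by linarith, by linarith⟩
    calc |(n : ℝ) * (n + 1) - d| = |1 - 2 * μ| * |nu n| := by
          rw [← abs_mul]; simp only [d, stringDenom]; rw [sub_add_cancel_left, abs_neg]
      _ ≤ 1 * (n + 1) := mul_le_mul this (abs_nu_le n) (abs_nonneg _) zero_le_one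
      _ ≤ 2 * n := by linarith
  have hden : μ * n ^ 4 ≤ d * (n * (n + 1)) := by
    have : μ * n ^ 4 = μ * n ^ 2 * n ^ 2 := by ring
    rw [this]
    exact mul_le_mul hd (by nlinarith) (by positivity) hd0.le
  have hsplit : 2 / d - 2 / (n * (n + 1)) = 2 * (n * (n + 1) - d) / (d * (n * (n + 1))) := by
    field_simp
  rw [hsplit, abs_div, abs_mul, abs_two, abs_of_pos (a := d * (n * (n + 1))) (by positivity)]
  calc 2 * |(n : ℝ) * (n + 1) - d| / (d * (n * (n + 1))) ≤ 2 * (2 * n) / (μ * n ^ 4) := by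
        gcongr
    _ = 4 / μ / n ^ 3 := by field_simp; ring

end StringWeights

theorem string_parameters_tendsto_two_general
    {Ω : Type*} [MeasureSpace Ω]
    (μ : ℝ) (hμ0 : 0 < μ) (hμ1 : μ < 1)
    (ε : ℕ → Ω → ℝ) (hmeas : ∀ n, Measurable (ε n))
    (hindep : iIndepFun ε ℙ)
    (hdist : ∀ n, Measure.map (ε n) ℙ = expMeasure 1) :
    ∀ᵐ ω : Ω,
      (∀ k : ℕ, 1 ≤ k →
        Summable (fun n : ℕ =>
          2 * ε (n + k) ω / ((n + k) * ((n + k : ℕ) + 1) + (1 - 2 * μ) * nu (n + k)))) ∧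
      Tendsto (fun k : ℕ =>
          (k : ℝ) * ∑' n : ℕ,
            2 * ε (n + k) ω / ((n + k) * ((n + k : ℕ) + 1) + (1 - 2 * μ) * nu (n + k)))
        atTop (nhds 2) := by
  have hint : Integrable (ε 0) ℙ :=
    (hdist 0 ▸ integrable_id_expMeasure one_pos).comp_measurable (hmeas 0)
  have hmean : ∫ ω, ε 0 ω = 1 := by
    rw [← integral_map (f := fun x => x) (hmeas 0).aemeasurable aestronglyMeasurable_id,
      hdist 0, integral_id_expMeasure one_pos, inv_one]
  have hslln := strong_law_ae_real ε hint (fun i j hij => hindep.indepFun hij)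
    fun i => ⟨(hmeas i).aemeasurable, (hmeas 0).aemeasurable, by rw [hdist, hdist]⟩
  have hnonneg : ∀ᵐ ω, ∀ n, 0 ≤ ε n ω := ae_all_iff.2 fun n =>
    ae_of_ae_map (hmeas n).aemeasurable (hdist n ▸ ae_nonneg_expMeasure)
  filter_upwards [hslln, hnonneg] with ω hS hx0
  rw [hmean] at hS
  have hw := fun m (hm : 1 ≤ m) => abs_two_div_stringDenom_sub_le hμ0 hμ1 hm
  have hterm : ∀ k n : ℕ, 2 / stringDenom μ (n + k) * ε (n + k) ω
      = 2 * ε (n + k) ω / ((n + k) * ((n + k : ℕ) + 1) + (1 - 2 * μ) * nu (n + k)) := by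
    intro k n; rw [stringDenom]; push_cast; ring
  refine ⟨fun k hk => ?_, ?_⟩
  · simpa only [hterm] using summable_tail_mul_of_tendsto_average hw hx0 hS hk
  · simpa only [hterm, mul_one] using tendsto_mul_tsum_mul_of_tendsto_average hw hx0 hS

theorem string_parameters_tendsto_two
    {Ω : Type*} [MeasureSpace Ω] [IsProbabilityMeasure (ℙ : Measure Ω)]
    (μ : ℝ) (hμ0 : 0 < μ) (hμ1 : μ < 1)
    (ε : ℕ → Ω → ℝ) (hmeas : ∀ n, Measurable (ε n))
    (hindep : iIndepFun ε ℙ)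
    (hdist : ∀ n, Measure.map (ε n) ℙ = expMeasure 1) :
    ∀ᵐ ω : Ω,
      (∀ k : ℕ, 1 ≤ k →
        Summable (fun n : ℕ =>
          2 * ε (n + k) ω / ((n + k) * ((n + k : ℕ) + 1) + (1 - 2 * μ) * nu (n + k)))) ∧
      Tendsto (fun k : ℕ =>
          (k : ℝ) * ∑' n : ℕ,
            2 * ε (n + k) ω / ((n + k) * ((n + k : ℕ) + 1) + (1 - 2 * μ) * nu (n + k)))
        atTop (nhds 2) :=
  string_parameters_tendsto_two_general μ hμ0 hμ1 ε hmeas hindep hdist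
end
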